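/- (Upper bound on the objective gap for TV/L2 ADM.) In the setting of the TV/L2 ADM iteration — F(X) = ‖H₂XH₁ᵀ − B‖_F² on real m×n matrices, G : W → ℝ convex on the space W of real p×q matrices, L : V → W linear, β > 0, iterates with X_{k+1} minimizing X ↦ F(X) + G(Y_k) + ⟨L(X) − Y_k, Z_k⟩_F + (β/2)‖L(X) − Y_k‖_F², Y_{k+1} minimizing Y ↦ F(X_{k+1}) + G(Y) + ⟨L(X_{k+1}) − Y, Z_k⟩_F + (β/2)‖L(X_{k+1}) − Y‖_F², and Z_{k+1} = Z_k + β(L(X_{k+1}) − Y_{k+1}) — suppose (X*,Y*) satisfies L(X*) = Y*. Then, with S_{k+1} = L(X_{k+1}) − Y_{k+1}, the objective gap satisfies (F(X_{k+1}) + G(Y_{k+1})) − (F(X*) + G(Y*)) ≤ −⟨S_{k+1}, Z_{k+1}⟩_F − β⟨Y_{k+1} − Y_k, S_{k+1} + (Y_{k+1} − Y*)⟩_F. -/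
import Mathlib


open Matrix

/-- Frobenius inner product on real matrices. -/
noncomputable def fip {m n : ℕ} (A B : Matrix (Fin m) (Fin n) ℝ) : ℝ :=
  (Aᵀ * B).trace

/-- Frobenius norm on real matrices. -/
noncomputable def fnorm {m n : ℕ} (A : Matrix (Fin m) (Fin n) ℝ) : ℝ :=
  Real.sqrt (fip A A)

/-- The augmented Lagrangian `L_β(X,Y,Z)`. -/
noncomputable def aug {m n p q : ℕ}
    (L : Matrix (Fin m) (Fin n) ℝ →ₗ[ℝ] Matrix (Fin p) (Fin q) ℝ)
    (F : Matrix (Fin m) (Fin n) ℝ → ℝ) (G : Matrix (Fin p) (Fin q) ℝ → ℝ)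
    (β : ℝ) (X : Matrix (Fin m) (Fin n) ℝ) (Y Z : Matrix (Fin p) (Fin q) ℝ) : ℝ :=
  F X + G Y + fip (L X - Y) Z + β / 2 * (fnorm (L X - Y)) ^ 2

section helpers
lemma fip_add_left {m n : ℕ} (A B C : Matrix (Fin m) (Fin n) ℝ) :
    fip (A + B) C = fip A C + fip B C := by
  simp [fip, Matrix.transpose_add, Matrix.add_mul]

lemma fip_sub_left {m n : ℕ} (A B C : Matrix (Fin m) (Fin n) ℝ) :
    fip (A - B) C = fip A C - fip B C := by
  simp [fip, Matrix.transpose_sub, Matrix.sub_mul]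

lemma fip_add_right {m n : ℕ} (A B C : Matrix (Fin m) (Fin n) ℝ) :
    fip A (B + C) = fip A B + fip A C := by
  simp [fip, Matrix.mul_add]

lemma fip_sub_right {m n : ℕ} (A B C : Matrix (Fin m) (Fin n) ℝ) :
    fip A (B - C) = fip A B - fip A C := by
  simp [fip, Matrix.mul_sub]

lemma fip_smul_left {m n : ℕ} (c : ℝ) (A B : Matrix (Fin m) (Fin n) ℝ) :
    fip (c • A) B = c * fip A B := by
  simp [fip, Matrix.transpose_smul, Matrix.smul_mul, Matrix.trace_smul, smul_eq_mul]

lemma fip_smul_right {m n : ℕ} (c : ℝ) (A B : Matrix (Fin m) (Fin n) ℝ) :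
    fip A (c • B) = c * fip A B := by
  simp [fip, Matrix.mul_smul, Matrix.trace_smul, smul_eq_mul]

lemma fip_comm {m n : ℕ} (A B : Matrix (Fin m) (Fin n) ℝ) :
    fip A B = fip B A := by
  rw [fip, ← Matrix.trace_transpose, Matrix.transpose_mul, Matrix.transpose_transpose, fip]

lemma fip_nonneg {m n : ℕ} (A : Matrix (Fin m) (Fin n) ℝ) :
    0 ≤ fip A A := by
  unfold fip Matrix.trace
  apply Finset.sum_nonneg
  intro j _
  simp only [Matrix.diag, Matrix.mul_apply, Matrix.transpose_apply]
  exact Finset.sum_nonneg fun i _ => mul_self_nonneg _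

lemma fip_lin_add {m n : ℕ} (t : ℝ) (A B C : Matrix (Fin m) (Fin n) ℝ) :
    fip (A + t • B) C = fip A C + t * fip B C := by
  rw [fip_add_left, fip_smul_left]

lemma fip_lin_sub {m n : ℕ} (t : ℝ) (A B C : Matrix (Fin m) (Fin n) ℝ) :
    fip (A - t • B) C = fip A C - t * fip B C := by
  rw [fip_sub_left, fip_smul_left]

lemma fip_quad_add {m n : ℕ} (t : ℝ) (A B : Matrix (Fin m) (Fin n) ℝ) :
    fip (A + t • B) (A + t • B) = fip A A + 2 * t * fip A B + t ^ 2 * fip B B := by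
  rw [fip_add_left, fip_add_right, fip_add_right, fip_smul_left, fip_smul_right,
    fip_smul_left, fip_smul_right, fip_comm B A]
  ring

lemma fip_quad_sub {m n : ℕ} (t : ℝ) (A B : Matrix (Fin m) (Fin n) ℝ) :
    fip (A - t • B) (A - t • B) = fip A A - 2 * t * fip A B + t ^ 2 * fip B B := by
  rw [fip_sub_left, fip_sub_right, fip_sub_right, fip_smul_left, fip_smul_right,
    fip_smul_left, fip_smul_right, fip_comm B A]
  ring

lemma fip_quad_one {m n : ℕ} (A B : Matrix (Fin m) (Fin n) ℝ) :
    fip (A + B) (A + B) = fip A A + 2 * fip A B + fip B B := by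
  rw [fip_add_left, fip_add_right, fip_add_right, fip_comm B A]; ring

lemma fnorm_sq {m n : ℕ} (A : Matrix (Fin m) (Fin n) ℝ) :
    fnorm A ^ 2 = fip A A := Real.sq_sqrt (fip_nonneg A)

lemma small_t {c d : ℝ} (h : ∀ t : ℝ, 0 < t → t ≤ 1 → 0 ≤ t * c + t ^ 2 * d) : 0 ≤ c := by
  by_contra hc
  push_neg at hc
  rcases le_or_gt d 0 with hd | hd
  · have := h 1 one_pos le_rfl; nlinarith
  · have ht0 : 0 < min 1 (-c / (2 * d)) := lt_min one_pos (div_pos (by linarith) (by linarith))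
    have hkey := h _ ht0 (min_le_left _ _)
    have hle : min 1 (-c / (2 * d)) ≤ -c / (2 * d) := min_le_right _ _
    have h1 : min 1 (-c / (2 * d)) * (2 * d) ≤ -c := (le_div_iff₀ (by linarith)).mp hle
    nlinarith [mul_le_mul_of_nonneg_left h1 ht0.le, mul_neg_of_pos_of_neg ht0 hc]
end helpers

theorem stmt5 {m n p q : ℕ}
    (L : Matrix (Fin m) (Fin n) ℝ →ₗ[ℝ] Matrix (Fin p) (Fin q) ℝ)
    (H₁ : Matrix (Fin n) (Fin n) ℝ) (H₂ : Matrix (Fin m) (Fin m) ℝ)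
    (B : Matrix (Fin m) (Fin n) ℝ)
    (F : Matrix (Fin m) (Fin n) ℝ → ℝ)
    (hFdef : ∀ X, F X = (fnorm (H₂ * X * H₁ᵀ - B)) ^ 2)
    (G : Matrix (Fin p) (Fin q) ℝ → ℝ) (hG : ConvexOn ℝ Set.univ G)
    (β : ℝ) (hβ : 0 < β)
    (X : ℕ → Matrix (Fin m) (Fin n) ℝ) (Y Z : ℕ → Matrix (Fin p) (Fin q) ℝ)
    (hX : ∀ k, ∀ X', aug L F G β (X (k+1)) (Y k) (Z k) ≤ aug L F G β X' (Y k) (Z k))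
    (hY : ∀ k, ∀ Y', aug L F G β (X (k+1)) (Y (k+1)) (Z k) ≤ aug L F G β (X (k+1)) Y' (Z k))
    (hZ : ∀ k, Z (k+1) = Z k + β • (L (X (k+1)) - Y (k+1)))
    (Xs : Matrix (Fin m) (Fin n) ℝ) (Ys : Matrix (Fin p) (Fin q) ℝ)
    (hfeas : L Xs = Ys)
    (S : ℕ → Matrix (Fin p) (Fin q) ℝ) (hS : ∀ k, S (k+1) = L (X (k+1)) - Y (k+1)) :
    ∀ k, (F (X (k+1)) + G (Y (k+1))) - (F Xs + G Ys) ≤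
      -fip (S (k+1)) (Z (k+1)) - β * fip (Y (k+1) - Y k) (S (k+1) + (Y (k+1) - Ys)) := by
  intro k
  -- X-step variational inequality
  have hXVI : 0 ≤ 2 * fip (H₂ * X (k+1) * H₁ᵀ - B) (H₂ * Xs * H₁ᵀ - H₂ * X (k+1) * H₁ᵀ)
      + fip (L Xs - L (X (k+1))) (Z k)
      + β * fip (L (X (k+1)) - Y k) (L Xs - L (X (k+1))) := by
    apply small_t (d := fip (H₂ * Xs * H₁ᵀ - H₂ * X (k+1) * H₁ᵀ)
        (H₂ * Xs * H₁ᵀ - H₂ * X (k+1) * H₁ᵀ)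
      + β / 2 * fip (L Xs - L (X (k+1))) (L Xs - L (X (k+1))))
    intro t ht0 ht1
    have key := hX k (X (k+1) + t • (Xs - X (k+1)))
    have e1 : H₂ * (X (k+1) + t • (Xs - X (k+1))) * H₁ᵀ - B
        = (H₂ * X (k+1) * H₁ᵀ - B) + t • (H₂ * Xs * H₁ᵀ - H₂ * X (k+1) * H₁ᵀ) := by
      rw [Matrix.mul_add, Matrix.add_mul, Matrix.mul_smul, Matrix.smul_mul,
        Matrix.mul_sub, Matrix.sub_mul, smul_sub]
      abel
    have e2 : L (X (k+1) + t • (Xs - X (k+1))) - Y k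
        = (L (X (k+1)) - Y k) + t • (L Xs - L (X (k+1))) := by
      rw [map_add, L.map_smul, map_sub, smul_sub]
      abel
    rw [aug, aug, hFdef, hFdef, e1, e2] at key
    simp only [fnorm_sq] at key
    rw [fip_quad_add, fip_quad_add, fip_lin_add] at key
    nlinarith [key]
  rw [hfeas] at hXVI
  -- Y-step variational inequality
  have hYVI : 0 ≤ G Ys - G (Y (k+1)) - fip (Ys - Y (k+1)) (Z k)
      - β * fip (L (X (k+1)) - Y (k+1)) (Ys - Y (k+1)) := by
    apply small_t (d := β / 2 * fip (Ys - Y (k+1)) (Ys - Y (k+1)))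
    intro t ht0 ht1
    have key := hY k (Y (k+1) + t • (Ys - Y (k+1)))
    have e3 : L (X (k+1)) - (Y (k+1) + t • (Ys - Y (k+1)))
        = (L (X (k+1)) - Y (k+1)) - t • (Ys - Y (k+1)) := by
      abel
    have hconv : G (Y (k+1) + t • (Ys - Y (k+1)))
        ≤ (1 - t) * G (Y (k+1)) + t * G Ys := by
      have hc := hG.2 (Set.mem_univ (Y (k+1))) (Set.mem_univ Ys)
        (show (0:ℝ) ≤ 1 - t by linarith) ht0.le (show (1 - t) + t = 1 by ring)
      have e4 : (1 - t) • Y (k+1) + t • Ys = Y (k+1) + t • (Ys - Y (k+1)) := by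
        rw [sub_smul, one_smul, smul_sub]
        abel
      rw [e4] at hc
      simpa using hc
    rw [aug, aug, e3] at key
    simp only [fnorm_sq] at key
    rw [fip_quad_sub, fip_lin_sub] at key
    nlinarith [key, hconv]
  -- F-side identity
  have hPQ : H₂ * Xs * H₁ᵀ - B
      = (H₂ * X (k+1) * H₁ᵀ - B) + (H₂ * Xs * H₁ᵀ - H₂ * X (k+1) * H₁ᵀ) := by
    abel
  have hF : F Xs - F (X (k+1))
      = 2 * fip (H₂ * X (k+1) * H₁ᵀ - B) (H₂ * Xs * H₁ᵀ - H₂ * X (k+1) * H₁ᵀ)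
        + fip (H₂ * Xs * H₁ᵀ - H₂ * X (k+1) * H₁ᵀ) (H₂ * Xs * H₁ᵀ - H₂ * X (k+1) * H₁ᵀ) := by
    rw [hFdef, hFdef, fnorm_sq, fnorm_sq, hPQ, fip_quad_one]
    ring
  have hQQ : 0 ≤ fip (H₂ * Xs * H₁ᵀ - H₂ * X (k+1) * H₁ᵀ)
      (H₂ * Xs * H₁ᵀ - H₂ * X (k+1) * H₁ᵀ) := fip_nonneg _
  -- the exact algebraic identity tying the two VIs to the goal bound
  have heq : fip (Ys - L (X (k+1))) (Z k)
      + β * fip (L (X (k+1)) - Y k) (Ys - L (X (k+1)))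
      - fip (Ys - Y (k+1)) (Z k)
      - β * fip (L (X (k+1)) - Y (k+1)) (Ys - Y (k+1))
      = -fip (L (X (k+1)) - Y (k+1)) (Z k + β • (L (X (k+1)) - Y (k+1)))
        - β * fip (Y (k+1) - Y k) ((L (X (k+1)) - Y (k+1)) + (Y (k+1) - Ys)) := by
    simp only [fip_sub_left, fip_sub_right, fip_add_left, fip_add_right, fip_smul_right]
    ring
  rw [hS, hZ]
  linarith [hXVI, hYVI, hF, hQQ, heq]
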